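/- arXiv:1806.05403 — 6 statements merged into one kernel-verified Lean document; each statement's English description precedes it below -/
import Mathlib

section
/- Let β > 0. When the β-perceptron algorithm terminates on a dataset with optimal margin ε* > 0 and max norm R, its output w satisfies min_i y_i (w·x_i)/||w|| ≥ β ε*/(2β + R²), i.e., the normalized output achieves margin at least βε*/(2β+R²). -/
/-!
Writing `v t = y (idx t) • x (idx t)` for the example added at step `t`, each step raises
`⟪w*, w⟫` by at least `ε*`, while it raises `‖w‖²` by `2 ⟪w, v t⟫ + ‖v t‖² < 2β + R²`, because a
step is taken only when `⟪w, v t⟫ < β`. After `T` steps, `T ε* ≤ ‖w T‖` and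
`‖w T‖² ≤ T (2β + R²)`, hence `‖w T‖ ε* ≤ 2β + R²`; the stopping condition `β ≤ y i ⟪w T, x i⟫`
then gives the normalized margin `β / ‖w T‖ ≥ β ε* / (2β + R²)`.
-/

open scoped RealInnerProductSpace

section PerceptronSteps

variable {E : Type*} [NormedAddCommGroup E] [InnerProductSpace ℝ E]
  {w v : ℕ → E} {T : ℕ}

theorem mul_le_inner_of_steps (h0 : w 0 = 0) (hstep : ∀ t < T, w (t + 1) = w t + v t)
    {u : E} {ε : ℝ} (hv : ∀ t < T, ε ≤ ⟪u, v t⟫) :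
    ∀ t ≤ T, (t : ℝ) * ε ≤ ⟪u, w t⟫ := by
  intro t
  induction t with
  | zero => simp [h0]
  | succ t ih =>
    intro (ht : t < T)
    rw [hstep t ht, inner_add_right]
    push_cast
    linarith [ih ht.le, hv t ht]

theorem norm_add_sq_le_of_inner_lt {a b : E} {β R : ℝ} (hab : ⟪a, b⟫ < β) (hb : ‖b‖ ≤ R) :
    ‖a + b‖ ^ 2 ≤ ‖a‖ ^ 2 + (2 * β + R ^ 2) := by
  have hb2 : ‖b‖ ^ 2 ≤ R ^ 2 := pow_le_pow_left₀ (norm_nonneg b) hb 2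
  rw [norm_add_sq_real]
  linarith

theorem norm_sq_le_of_steps (h0 : w 0 = 0) (hstep : ∀ t < T, w (t + 1) = w t + v t)
    {β R : ℝ} (hsmall : ∀ t < T, ⟪w t, v t⟫ < β) (hR : ∀ t < T, ‖v t‖ ≤ R) :
    ∀ t ≤ T, ‖w t‖ ^ 2 ≤ t * (2 * β + R ^ 2) := by
  intro t
  induction t with
  | zero => simp [h0]
  | succ t ih =>
    intro (ht : t < T)
    rw [hstep t ht]
    push_cast
    linarith [ih ht.le, norm_add_sq_le_of_inner_lt (hsmall t ht) (hR t ht)]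

theorem norm_mul_le_of_steps (h0 : w 0 = 0) (hstep : ∀ t < T, w (t + 1) = w t + v t)
    {u : E} (hu : ‖u‖ = 1) {ε β R : ℝ} (hε : 0 ≤ ε) (hv : ∀ t < T, ε ≤ ⟪u, v t⟫)
    (hsmall : ∀ t < T, ⟪w t, v t⟫ < β) (hR : ∀ t < T, ‖v t‖ ≤ R) (hwT : w T ≠ 0) :
    ‖w T‖ * ε ≤ 2 * β + R ^ 2 := by
  have hlower : (T : ℝ) * ε ≤ ‖w T‖ :=
    (mul_le_inner_of_steps h0 hstep hv T le_rfl).trans <| by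
      simpa [hu] using real_inner_le_norm u (w T)
  have hupper := norm_sq_le_of_steps h0 hstep hsmall hR T le_rfl
  have hpos : 0 < ‖w T‖ := norm_pos_iff.mpr hwT
  have hC : 0 ≤ 2 * β + R ^ 2 := by
    nlinarith [T.cast_nonneg (α := ℝ), pow_pos hpos 2]
  have : ‖w T‖ * (‖w T‖ * ε) ≤ ‖w T‖ * (2 * β + R ^ 2) := by
    nlinarith [mul_le_mul_of_nonneg_right hlower hC]
  exact le_of_mul_le_mul_left this hpos

end PerceptronSteps

theorem beta_perceptron_margin {d m : ℕ} (β : ℝ) (hβ : 0 < β)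
    (x : Fin m → EuclideanSpace ℝ (Fin d)) (y : Fin m → ℝ)
    (hy : ∀ i, y i = 1 ∨ y i = -1)
    (wstar : EuclideanSpace ℝ (Fin d)) (hwstar : ‖wstar‖ = 1)
    (εstar R : ℝ) (hε : 0 < εstar)
    (hmargin : ∀ i, εstar ≤ y i * ⟪wstar, x i⟫)
    (hR : ∀ i, ‖x i‖ ≤ R)
    (T : ℕ) (w : ℕ → EuclideanSpace ℝ (Fin d)) (idx : ℕ → Fin m)
    (h0 : w 0 = 0)
    (hrun : ∀ t < T, y (idx t) * ⟪w t, x (idx t)⟫ < β ∧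
      w (t + 1) = w t + y (idx t) • x (idx t))
    (hstop : ∀ i, β ≤ y i * ⟪w T, x i⟫) :
    ∀ i, β * εstar / (2 * β + R ^ 2) ≤ y i * ⟪w T, x i⟫ / ‖w T‖ := by
  intro i
  have hnorm : ∀ j, ‖y j • x j‖ ≤ R := fun j => by
    rcases hy j with h | h <;> simpa [h, norm_smul] using hR j
  have hwT : w T ≠ 0 := by
    rintro h
    simpa [h, not_le.mpr hβ] using hstop i
  have hkey : ‖w T‖ * εstar ≤ 2 * β + R ^ 2 :=
    norm_mul_le_of_steps h0 (fun t ht => (hrun t ht).2) hwstar hε.le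
      (fun t _ => by simpa [real_inner_smul_right] using hmargin (idx t))
      (fun t ht => by simpa [real_inner_smul_right] using (hrun t ht).1)
      (fun t _ => hnorm (idx t)) hwT
  have hpos : 0 < ‖w T‖ := norm_pos_iff.mpr hwT
  calc β * εstar / (2 * β + R ^ 2) ≤ β / ‖w T‖ := by
        rw [div_le_div_iff₀ (by positivity) hpos]
        nlinarith
    _ ≤ y i * ⟪w T, x i⟫ / ‖w T‖ := div_le_div_of_nonneg_right (hstop i) hpos.le
end

section
/- Suppose all examples have norm at most 1 and optimal margin ε* ∈ (0,1]. Fix α ∈ (1,2). The ∞-perceptron algorithm, which at step t updates on an example with y_i w^(t)·x_i ≤ β_t where β_t = 0.5((t+1)^α − t^α − 1), performs at most (1/ε*)^{2/(2−α)} updates. -/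
/-!
Classical perceptron potential argument with a growing threshold. Each update adds at least
`ε*` to `⟪w*, w⟫`, so after `T` updates `T ε* ≤ ⟪w*, w_T⟫ ≤ ‖w_T‖`. The threshold
`β_t` is chosen so that `2 β_t + 1` is the increment of `t ↦ t ^ α`, hence `‖w_T‖² ≤ T ^ α`.
Together `(T ε*)² ≤ T ^ α`, i.e. `T ^ (2 - α) ≤ ε*⁻²`.
-/

open scoped RealInnerProductSpace

namespace Perceptron

variable {E : Type*} [NormedAddCommGroup E] [InnerProductSpace ℝ E]
  {w v : ℕ → E} {T : ℕ}

theorem mul_le_inner (h0 : w 0 = 0) (hstep : ∀ t < T, w (t + 1) = w t + v t)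
    {u : E} {ε : ℝ} (hmargin : ∀ t < T, ε ≤ ⟪u, v t⟫) :
    ∀ t ≤ T, t * ε ≤ ⟪u, w t⟫ := by
  intro t ht
  induction t with
  | zero => simp [h0]
  | succ t ih =>
    rw [hstep t ht, inner_add_right]
    push_cast
    linarith [ih (Nat.le_of_succ_le ht), hmargin t ht]

theorem norm_sq_le (h0 : w 0 = 0) (hstep : ∀ t < T, w (t + 1) = w t + v t)
    (hv : ∀ t < T, ‖v t‖ ≤ 1) {f : ℕ → ℝ} (hf0 : 0 ≤ f 0)
    (hupdate : ∀ t < T, 2 * ⟪w t, v t⟫ ≤ f (t + 1) - f t - 1) :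
    ∀ t ≤ T, ‖w t‖ ^ 2 ≤ f t := by
  intro t ht
  induction t with
  | zero => simpa [h0] using hf0
  | succ t ih =>
    have hv_sq : ‖v t‖ ^ 2 ≤ 1 := pow_le_one₀ (norm_nonneg _) (hv t ht)
    rw [hstep t ht, norm_add_sq_real]
    linarith [ih (Nat.le_of_succ_le ht), hupdate t ht]

end Perceptron

theorem le_one_div_rpow_of_sq_mul_le_rpow {T ε α : ℝ} (hT : 0 ≤ T) (hε : 0 < ε) (hα : α < 2)
    (h : (T * ε) ^ 2 ≤ T ^ α) : T ≤ (1 / ε) ^ (2 / (2 - α)) := by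
  rcases hT.eq_or_lt with rfl | hT
  · positivity
  have hpow : T ^ (2 - α) ≤ (1 / ε) ^ 2 := by
    rw [Real.rpow_sub hT, Real.rpow_two, div_le_iff₀ (by positivity), div_pow,
      one_pow, div_mul_eq_mul_div, one_mul, le_div_iff₀ (by positivity), ← mul_pow]
    exact h
  have h2α : 0 < 2 - α := by linarith
  calc T = (T ^ (2 - α)) ^ (1 / (2 - α)) := by
        rw [← Real.rpow_mul hT.le, mul_one_div_cancel h2α.ne', Real.rpow_one]
    _ ≤ ((1 / ε) ^ 2) ^ (1 / (2 - α)) := by gcongr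
    _ = (1 / ε) ^ (2 / (2 - α)) := by
        rw [← Real.rpow_natCast, ← Real.rpow_mul (by positivity)]
        ring_nf

theorem infty_perceptron_update_bound_general {d m : ℕ} (α : ℝ) (hα2 : α < 2)
    (x : Fin m → EuclideanSpace ℝ (Fin d)) (y : Fin m → ℝ)
    (hy : ∀ i, y i = 1 ∨ y i = -1)
    (hnorm : ∀ i, ‖x i‖ ≤ 1)
    (wstar : EuclideanSpace ℝ (Fin d)) (hwstar : ‖wstar‖ = 1)
    (εstar : ℝ) (hε0 : 0 < εstar)
    (hmargin : ∀ i, εstar ≤ y i * ⟪wstar, x i⟫)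
    (T : ℕ) (w : ℕ → EuclideanSpace ℝ (Fin d)) (idx : ℕ → Fin m)
    (h0 : w 0 = 0)
    (hrun : ∀ t < T,
      y (idx t) * ⟪w t, x (idx t)⟫ ≤ 0.5 * (((t : ℝ) + 1) ^ α - (t : ℝ) ^ α - 1) ∧
      w (t + 1) = w t + y (idx t) • x (idx t)) :
    (T : ℝ) ≤ (1 / εstar) ^ (2 / (2 - α)) := by
  have hstep (t) (ht : t < T) := (hrun t ht).2
  have hnorm_update (t) (_ : t < T) : ‖y (idx t) • x (idx t)‖ ≤ 1 := by
    rcases hy (idx t) with h | h <;> simpa [h, norm_smul] using hnorm (idx t)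
  have hinner := Perceptron.mul_le_inner h0 hstep (u := wstar) fun t _ => by
    simpa [real_inner_smul_right] using hmargin (idx t)
  have hsq := Perceptron.norm_sq_le h0 hstep hnorm_update (f := fun t : ℕ => (t : ℝ) ^ α)
    (Real.rpow_nonneg (Nat.cast_nonneg 0) α) fun t ht => by
      simp only [real_inner_smul_right]; push_cast; linarith [(hrun t ht).1]
  have hcs : ⟪wstar, w T⟫ ≤ ‖w T‖ := by
    simpa [hwstar] using real_inner_le_norm wstar (w T)
  refine le_one_div_rpow_of_sq_mul_le_rpow T.cast_nonneg hε0 hα2 ?_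
  calc ((T : ℝ) * εstar) ^ 2 ≤ ‖w T‖ ^ 2 := by
        gcongr
        exact (hinner T le_rfl).trans hcs
    _ ≤ (T : ℝ) ^ α := hsq T le_rfl

theorem infty_perceptron_update_bound {d m : ℕ} (α : ℝ) (hα1 : 1 < α) (hα2 : α < 2)
    (x : Fin m → EuclideanSpace ℝ (Fin d)) (y : Fin m → ℝ)
    (hy : ∀ i, y i = 1 ∨ y i = -1)
    (hnorm : ∀ i, ‖x i‖ ≤ 1)
    (wstar : EuclideanSpace ℝ (Fin d)) (hwstar : ‖wstar‖ = 1)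
    (εstar : ℝ) (hε0 : 0 < εstar) (hε1 : εstar ≤ 1)
    (hmargin : ∀ i, εstar ≤ y i * ⟪wstar, x i⟫)
    (T : ℕ) (w : ℕ → EuclideanSpace ℝ (Fin d)) (idx : ℕ → Fin m)
    (h0 : w 0 = 0)
    (hrun : ∀ t < T,
      y (idx t) * ⟪w t, x (idx t)⟫ ≤ 0.5 * (((t : ℝ) + 1) ^ α - (t : ℝ) ^ α - 1) ∧
      w (t + 1) = w t + y (idx t) • x (idx t)) :
    (T : ℝ) ≤ (1 / εstar) ^ (2 / (2 - α)) :=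
  infty_perceptron_update_bound_general α hα2 x y hy hnorm wstar hwstar εstar hε0 hmargin T w idx h0
    hrun
end

section
/- For α ∈ (1,2), the function f(t) = ((t+1)^α − t^α − 1)/(2 t^{α/2}) is non-increasing on t ≥ 1. -/
/-!
Up to the positive factor `α t^(α/2-1) / (2 t^(α/2))²`, the derivative of the function is
`(t - 1)(t + 1)^(α-1) - (t^α - 1)`. Put `β = α - 1 ∈ (0, 1)`. Bernoulli's inequality gives
`(t + 1)^β ≤ t^β + β t^(β-1)`, and weighted AM-GM gives `(1 - β) t^β + β t^(β-1) ≥ 1`; multiplying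
the first by `t - 1 ≥ 0` and using the second yields `(t - 1)(t + 1)^β ≤ t^(β+1) - 1`.
-/

open Real Set

noncomputable def marginFn (α t : ℝ) : ℝ :=
  ((t + 1) ^ α - t ^ α - 1) / (2 * t ^ (α / 2))

section

variable {β t : ℝ}

lemma rpow_add_one_le (hβ0 : 0 ≤ β) (hβ1 : β ≤ 1) (ht : 0 < t) :
    (t + 1) ^ β ≤ t ^ β + β * t ^ (β - 1) := by
  have bernoulli : (1 + t⁻¹) ^ β ≤ 1 + β * t⁻¹ :=
    rpow_one_add_le_one_add_mul_self (by linarith [inv_pos.2 ht]) hβ0 hβ1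
  calc (t + 1) ^ β = t ^ β * (1 + t⁻¹) ^ β := by
        rw [← mul_rpow ht.le (by positivity), mul_add, mul_inv_cancel₀ ht.ne', mul_one]
    _ ≤ t ^ β * (1 + β * t⁻¹) := by gcongr
    _ = t ^ β + β * t ^ (β - 1) := by rw [rpow_sub_one ht.ne']; ring

lemma one_le_weighted_rpow (hβ0 : 0 ≤ β) (hβ1 : β ≤ 1) (ht : 0 < t) :
    1 ≤ (1 - β) * t ^ β + β * t ^ (β - 1) :=
  calc (1 : ℝ) = (t ^ β) ^ (1 - β) * (t ^ (β - 1)) ^ β := by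
        rw [← rpow_mul ht.le, ← rpow_mul ht.le, ← rpow_add ht]
        ring_nf
        exact (rpow_zero t).symm
    _ ≤ _ := geom_mean_le_arith_mean2_weighted (by linarith) hβ0 (by positivity)
        (by positivity) (by ring)

lemma sub_one_mul_add_one_rpow_le (hβ0 : 0 ≤ β) (hβ1 : β ≤ 1) (ht : 1 ≤ t) :
    (t - 1) * (t + 1) ^ β ≤ t ^ (β + 1) - 1 := by
  have ht0 : 0 < t := by linarith
  calc (t - 1) * (t + 1) ^ β ≤ (t - 1) * (t ^ β + β * t ^ (β - 1)) := by
        exact mul_le_mul_of_nonneg_left (rpow_add_one_le hβ0 hβ1 ht0) (by linarith)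
    _ = t ^ (β + 1) - ((1 - β) * t ^ β + β * t ^ (β - 1)) := by
        rw [rpow_add_one ht0.ne', rpow_sub_one ht0.ne']
        field_simp
        ring
    _ ≤ t ^ (β + 1) - 1 := by linarith [one_le_weighted_rpow hβ0 hβ1 ht0]

end

lemma hasDerivAt_marginFn (α : ℝ) {x : ℝ} (hx : 0 < x) :
    HasDerivAt (marginFn α)
      (α * x ^ (α / 2 - 1) * ((x - 1) * (x + 1) ^ (α - 1) - (x ^ α - 1)) /
        (2 * x ^ (α / 2)) ^ 2) x := by
  have hnum : HasDerivAt (fun t => (t + 1) ^ α - t ^ α - 1)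
      (1 * α * (x + 1) ^ (α - 1) - α * x ^ (α - 1)) x :=
    ((((hasDerivAt_id x).add_const 1).rpow_const (Or.inl (by positivity))).sub
      (hasDerivAt_rpow_const (Or.inl hx.ne'))).sub_const 1
  have hden : HasDerivAt (fun t => 2 * t ^ (α / 2)) (2 * (α / 2 * x ^ (α / 2 - 1))) x :=
    (hasDerivAt_rpow_const (Or.inl hx.ne')).const_mul 2
  refine (hnum.div hden (by positivity)).congr_deriv ?_
  rw [rpow_sub_one hx.ne', rpow_sub_one hx.ne', rpow_sub_one (by positivity : x + 1 ≠ 0)]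
  field_simp
  ring

theorem margin_fn_antitone (α : ℝ) (hα1 : 1 < α) (hα2 : α < 2) :
    AntitoneOn (fun t : ℝ => ((t + 1) ^ α - t ^ α - 1) / (2 * t ^ (α / 2)))
      (Set.Ici (1 : ℝ)) := by
  change AntitoneOn (marginFn α) (Ici 1)
  have hderiv (x : ℝ) (hx : 1 ≤ x) := hasDerivAt_marginFn α (by linarith : 0 < x)
  refine antitoneOn_of_deriv_nonpos (convex_Ici 1)
    (fun x hx => (hderiv x hx).continuousAt.continuousWithinAt)
    (fun x hx => (hderiv x (interior_subset hx)).differentiableAt.differentiableWithinAt)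
    fun x hx => ?_
  rw [interior_Ici, mem_Ioi] at hx
  have key := sub_one_mul_add_one_rpow_le (β := α - 1) (by linarith) (by linarith) hx.le
  rw [sub_add_cancel] at key
  have hx0 : 0 < x := by linarith
  rw [(hderiv x hx.le).deriv]
  exact div_nonpos_of_nonpos_of_nonneg
    (mul_nonpos_of_nonneg_of_nonpos (by positivity) (by linarith)) (sq_nonneg _)
end

section
/- For α ∈ (1,2) and real t ≥ 1, the inequality (t+1)^{α−1}(t−1) − t^α + 1 ≤ 0 holds. -/
/-!
Two applications of Bernoulli's inequality for exponents in `[0, 1]`, i.e. the tangent-line bound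
for the concave function `x ↦ x ^ p`. Expanding `(t + 1) ^ (α - 1)` about `t`
reduces the claim to `1 ≤ t ^ (α - 2) * (1 + (2 - α) * (t - 1))`, and this is again Bernoulli,
`t ^ (2 - α) ≤ 1 + (2 - α) * (t - 1)`.
-/

open Real

theorem rpow_add_le_rpow_add_mul_rpow_sub_one_mul {x y p : ℝ} (hx : 0 < x) (hy : -x ≤ y)
    (hp0 : 0 ≤ p) (hp1 : p ≤ 1) : (x + y) ^ p ≤ x ^ p + p * x ^ (p - 1) * y := by
  have hyx : -1 ≤ y / x := by rwa [le_div_iff₀ hx, neg_one_mul]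
  calc (x + y) ^ p = x ^ p * (1 + y / x) ^ p := by
        rw [← mul_rpow hx.le (by linarith), mul_one_add, mul_div_cancel₀ _ hx.ne']
    _ ≤ x ^ p * (1 + p * (y / x)) :=
        mul_le_mul_of_nonneg_left (rpow_one_add_le_one_add_mul_self hyx hp0 hp1)
          (rpow_nonneg hx.le p)
    _ = x ^ p + p * x ^ (p - 1) * y := by
        rw [rpow_sub_one hx.ne']
        ring

theorem margin_deriv_ineq (α t : ℝ) (hα1 : 1 < α) (hα2 : α < 2) (ht : 1 ≤ t) :
    (t + 1) ^ (α - 1) * (t - 1) - t ^ α + 1 ≤ 0 := by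
  have ht0 : 0 < t := by linarith
  set a := t ^ (α - 2) with ha
  have ha0 : 0 < a := rpow_pos_of_pos ht0 _
  have hpow_sub_one : t ^ (α - 1) = a * t := by
    rw [ha, ← rpow_add_one ht0.ne']; ring_nf
  have hpow : t ^ α = a * t ^ 2 := by
    rw [ha, ← rpow_add_natCast ht0.ne']; push_cast; ring_nf
  have hexpand : (t + 1) ^ (α - 1) ≤ a * t + (α - 1) * a := by
    have h := rpow_add_le_rpow_add_mul_rpow_sub_one_mul ht0 (by linarith : -t ≤ 1)
      (by linarith : 0 ≤ α - 1) (by linarith)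
    rwa [hpow_sub_one, mul_one, show α - 1 - 1 = α - 2 by ring] at h
  have hone : 1 ≤ a * (1 + (2 - α) * (t - 1)) := by
    have h := rpow_one_add_le_one_add_mul_self (by linarith : -1 ≤ t - 1)
      (by linarith : 0 ≤ 2 - α) (by linarith)
    rw [add_sub_cancel] at h
    calc (1 : ℝ) = a * t ^ (2 - α) := by rw [ha, ← rpow_add ht0]; norm_num
      _ ≤ a * (1 + (2 - α) * (t - 1)) := mul_le_mul_of_nonneg_left h ha0.le
  have hmul := mul_le_mul_of_nonneg_right hexpand (by linarith : 0 ≤ t - 1)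
  rw [hpow]
  linarith
end

section
/- If w^(0)=0 and w^(t+1)=w^(t)+v_t with ||v_t|| ≤ 1 and w^(t)·v_t ≤ 0 for all t, then for every t ≥ 1 the average v^(t) = w^(t)/t lies in the convex hull of {v_0,...,v_{t−1}} and satisfies ||v^(t)|| ≤ 1/√t; consequently for every unit vector w there exists some v_s with v_s·w ≤ 1/√t. -/
/-!
Since `⟪w t, v t⟫ ≤ 0`, expanding `‖w t + v t‖²` gives `‖w (t+1)‖² ≤ ‖w t‖² + 1`, so
`‖w t‖ ≤ √t` and the average `w t / t` has norm at most `1 / √t`. The average is a convex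
combination of `v 0, …, v (t-1)`, so for a unit vector `u` some `⟪v s, u⟫` is at most
`⟪w t / t, u⟫ ≤ ‖w t / t‖ ≤ 1 / √t`.
-/

open Finset
open scoped RealInnerProductSpace

section PartialSums

variable {E : Type*} [NormedAddCommGroup E] [InnerProductSpace ℝ E]

theorem norm_sq_sum_range_le_of_inner_nonpos (v : ℕ → E) (hnorm : ∀ s, ‖v s‖ ≤ 1)
    (hneg : ∀ t, ⟪∑ s ∈ range t, v s, v t⟫ ≤ 0) (t : ℕ) :
    ‖∑ s ∈ range t, v s‖ ^ 2 ≤ t := by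
  induction t with
  | zero => simp
  | succ n ih =>
    have hv : ‖v n‖ ^ 2 ≤ 1 := pow_le_one₀ (norm_nonneg _) (hnorm n)
    rw [sum_range_succ, norm_add_sq_real]
    push_cast
    linarith [hneg n]

theorem norm_sum_range_le_sqrt_of_inner_nonpos (v : ℕ → E) (hnorm : ∀ s, ‖v s‖ ≤ 1)
    (hneg : ∀ t, ⟪∑ s ∈ range t, v s, v t⟫ ≤ 0) (t : ℕ) :
    ‖∑ s ∈ range t, v s‖ ≤ Real.sqrt t :=
  Real.le_sqrt_of_sq_le (norm_sq_sum_range_le_of_inner_nonpos v hnorm hneg t)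

end PartialSums

theorem inv_smul_sum_range_mem_convexHull {E : Type*} [AddCommGroup E] [Module ℝ E]
    (v : ℕ → E) {t : ℕ} (ht : 0 < t) :
    (t : ℝ)⁻¹ • ∑ s ∈ range t, v s ∈ convexHull ℝ (v '' Set.Iio t) := by
  have hmem := (range t).centerMass_mem_convexHull (w := fun _ => (1 : ℝ)) (z := v)
    (s := v '' Set.Iio t) (fun _ _ => zero_le_one) (by simpa using ht)
    (fun i hi => ⟨i, mem_range.mp hi, rfl⟩)
  simpa [centerMass] using hmem

theorem norm_inv_smul_le_inv_sqrt {E : Type*} [SeminormedAddCommGroup E] [NormedSpace ℝ E]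
    {x : E} {t : ℝ} (ht : 0 < t) (hx : ‖x‖ ≤ Real.sqrt t) :
    ‖t⁻¹ • x‖ ≤ 1 / Real.sqrt t := by
  rw [norm_smul, norm_inv, Real.norm_of_nonneg ht.le, ← Real.sqrt_div_self', div_eq_inv_mul]
  gcongr

theorem exists_inner_le_inner_average {E : Type*} [NormedAddCommGroup E] [InnerProductSpace ℝ E]
    (v : ℕ → E) {t : ℕ} (ht : 0 < t) (u : E) :
    ∃ s < t, ⟪v s, u⟫ ≤ ⟪(t : ℝ)⁻¹ • ∑ s ∈ range t, v s, u⟫ := by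
  have htpos : (0 : ℝ) < t := by exact_mod_cast ht
  have hsum : ∑ s ∈ range t, ⟪v s, u⟫ ≤
      ∑ _s ∈ range t, ⟪(t : ℝ)⁻¹ • ∑ s ∈ range t, v s, u⟫ := by
    rw [sum_const, card_range, nsmul_eq_mul, real_inner_smul_left, sum_inner,
      mul_inv_cancel_left₀ htpos.ne']
  obtain ⟨s, hs, hle⟩ := exists_le_of_sum_le (nonempty_range_iff.mpr ht.ne') hsum
  exact ⟨s, mem_range.mp hs, hle⟩

theorem perceptron_average_iterate {d : ℕ}
    (v : ℕ → EuclideanSpace ℝ (Fin d))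
    (hnorm : ∀ s, ‖v s‖ ≤ 1)
    (w : ℕ → EuclideanSpace ℝ (Fin d))
    (hw : ∀ t, w t = ∑ s ∈ Finset.range t, v s)
    (hneg : ∀ t, ⟪w t, v t⟫ ≤ 0) :
    ∀ t : ℕ, 1 ≤ t →
      ((t : ℝ)⁻¹ • w t ∈ convexHull ℝ (Set.image v (Set.Iio t)) ∧
       ‖(t : ℝ)⁻¹ • w t‖ ≤ 1 / Real.sqrt t ∧
       ∀ u : EuclideanSpace ℝ (Fin d), ‖u‖ = 1 →
         ∃ s < t, ⟪v s, u⟫ ≤ 1 / Real.sqrt t) := by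
  simp only [hw] at hneg ⊢
  intro t ht
  have htpos : 0 < t := ht
  have hbound : ‖(t : ℝ)⁻¹ • ∑ s ∈ range t, v s‖ ≤ 1 / Real.sqrt t :=
    norm_inv_smul_le_inv_sqrt (by exact_mod_cast htpos)
      (norm_sum_range_le_sqrt_of_inner_nonpos v hnorm hneg t)
  refine ⟨inv_smul_sum_range_mem_convexHull v htpos, hbound, fun u hu => ?_⟩
  obtain ⟨s, hs, hle⟩ := exists_inner_le_inner_average v htpos u
  refine ⟨s, hs, hle.trans ?_⟩
  calc ⟪(t : ℝ)⁻¹ • ∑ s ∈ range t, v s, u⟫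
      ≤ ‖(t : ℝ)⁻¹ • ∑ s ∈ range t, v s‖ * ‖u‖ := real_inner_le_norm _ _
    _ ≤ 1 / Real.sqrt t := by rw [hu, mul_one]; exact hbound
end

section
/- Let X ⊂ R^d be a finite set of n points with max_{x∈X}||x|| = 1 and let ε > 0. The number of labelings Y : X → {±1} that are linearly separable with margin at least ε (i.e., there exists a unit vector w with Y(x)(w·x) ≥ ε for all x ∈ X) is at most (2(n+1))^{1/ε²}. -/
/-!
Run the perceptron on the signed points `Y x • x` of a labeling with margin `ε`: starting from
`0`, add any misclassified signed point. After `t` updates the sum `s` satisfies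
`t ε ≤ ⟪w, s⟫ ≤ ‖s‖` and `‖s‖² ≤ t`, so at most `1/ε²` updates occur, and the final `s`
classifies every point correctly. Hence `Y x` is the sign of `⟪s, x⟫`, and `Y` is determined by
the list of at most `⌊1/ε²⌋₊` updates, each one of the `2n` signed points. Padding such lists to
length exactly `⌊1/ε²⌋₊` with a blank symbol gives at most `(2n + 1)^⌊1/ε²⌋₊` labelings.
-/

open scoped RealInnerProductSpace

namespace Perceptron

variable {E ι : Type*} [NormedAddCommGroup E] [InnerProductSpace ℝ E]
  (v : ι → E) (w : E) (ε : ℝ)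

def Invariant (L : List ι) : Prop :=
  L.length * ε ≤ ⟪w, (L.map v).sum⟫ ∧ ‖(L.map v).sum‖ ^ 2 ≤ L.length

variable {v w ε}

theorem Invariant.length_le {L : List ι} (h : Invariant v w ε L) (hw : ‖w‖ ≤ 1)
    (hε : 0 < ε) : (L.length : ℝ) ≤ 1 / ε ^ 2 := by
  obtain ⟨hprogress, hnorm⟩ := h
  set s := (L.map v).sum
  set t := (L.length : ℝ)
  have ht : 0 ≤ t := Nat.cast_nonneg _
  have hts : t * ε ≤ ‖s‖ := calc
    t * ε ≤ ⟪w, s⟫ := hprogress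
    _ ≤ ‖w‖ * ‖s‖ := real_inner_le_norm w s
    _ ≤ ‖s‖ := mul_le_of_le_one_left (norm_nonneg s) hw
  have hsq : t * (t * ε ^ 2) ≤ t := calc
    t * (t * ε ^ 2) = (t * ε) ^ 2 := by ring
    _ ≤ ‖s‖ ^ 2 := pow_le_pow_left₀ (by positivity) hts 2
    _ ≤ t := hnorm
  rw [le_div_iff₀ (by positivity)]
  rcases ht.eq_or_lt with ht0 | htpos
  · rw [← ht0]; norm_num
  · exact le_of_mul_le_mul_left (by linarith) htpos

theorem Invariant.cons {L : List ι} (h : Invariant v w ε L) {i : ι} (hvi : ‖v i‖ ≤ 1)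
    (hmargin : ε ≤ ⟪w, v i⟫) (hmistake : ⟪(L.map v).sum, v i⟫ ≤ 0) :
    Invariant v w ε (i :: L) := by
  obtain ⟨hprogress, hnorm⟩ := h
  simp only [Invariant, List.map_cons, List.sum_cons, List.length_cons, Nat.cast_succ]
  constructor
  · rw [inner_add_right]
    linarith
  · rw [norm_add_sq_real, real_inner_comm]
    nlinarith [norm_nonneg (v i)]

theorem exists_list_length_le_of_margin (hw : ‖w‖ ≤ 1) (hε : 0 < ε)
    (hv : ∀ i, ‖v i‖ ≤ 1) (hmargin : ∀ i, ε ≤ ⟪w, v i⟫) :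
    ∃ L : List ι, L.length ≤ ⌊1 / ε ^ 2⌋₊ ∧ ∀ i, 0 < ⟪(L.map v).sum, v i⟫ := by
  by_contra! hstuck
  have hgrow : ∀ m : ℕ, ∃ L : List ι, Invariant v w ε L ∧ L.length = m := by
    intro m
    induction m with
    | zero => exact ⟨[], by simp [Invariant], rfl⟩
    | succ m ih =>
      obtain ⟨L, hL, rfl⟩ := ih
      obtain ⟨i, hi⟩ := hstuck L (Nat.le_floor (hL.length_le hw hε))
      exact ⟨i :: L, hL.cons (hv i) (hmargin i) hi, rfl⟩
  obtain ⟨L, hL, hlen⟩ := hgrow (⌊1 / ε ^ 2⌋₊ + 1)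
  have := Nat.le_floor (hL.length_le hw hε)
  omega

end Perceptron

theorem Nat.card_le_of_injective_list {S α : Type*} [Finite α] (f : S → List α)
    (hf : Function.Injective f) {K : ℕ} (hK : ∀ s, (f s).length ≤ K) :
    Nat.card S ≤ (Nat.card α + 1) ^ K := by
  let pad : S → Fin K → Option α := fun s i => (f s)[(i : ℕ)]?
  have hpad : Function.Injective pad := by
    refine fun s s' h => hf (List.ext_getElem? fun i => ?_)
    by_cases hi : i < K
    · exact congrFun h ⟨i, hi⟩
    · rw [List.getElem?_eq_none ((hK s).trans (not_lt.mp hi)),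
        List.getElem?_eq_none ((hK s').trans (not_lt.mp hi))]
  calc Nat.card S ≤ Nat.card (Fin K → Option α) := Nat.card_le_card_of_injective pad hpad
    _ = (Nat.card α + 1) ^ K := by rw [Nat.card_fun, Finite.card_option, Nat.card_fin]

theorem eq_of_mem_pair_of_mul_pos {a b t : ℝ} (ha : a ∈ ({-1, 1} : Set ℝ))
    (hb : b ∈ ({-1, 1} : Set ℝ)) (hat : 0 < a * t) (hbt : 0 < b * t) : a = b := by
  simp only [Set.mem_insert_iff, Set.mem_singleton_iff] at ha hb
  rcases ha with rfl | rfl <;> rcases hb with rfl | rfl <;> first | rfl | linarith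

theorem Nat.card_prod_sign (α : Type*) : Nat.card (α × ({-1, 1} : Set ℝ)) = 2 * Nat.card α := by
  rw [Nat.card_prod, Nat.card_coe_set_eq ({-1, 1} : Set ℝ), Set.ncard_pair (by norm_num), mul_comm]

section Labelings

variable {E : Type*} [NormedAddCommGroup E] [InnerProductSpace ℝ E] {X : Finset E}

def signedPoint (p : X × ({-1, 1} : Set ℝ)) : E := (p.2 : ℝ) • (p.1 : E)

theorem norm_signedPoint (p : X × ({-1, 1} : Set ℝ)) : ‖signedPoint p‖ = ‖(p.1 : E)‖ := by
  obtain ⟨x, a, ha⟩ := p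
  simp only [Set.mem_insert_iff, Set.mem_singleton_iff] at ha
  rcases ha with rfl | rfl <;> simp [signedPoint]

theorem exists_encoding_of_margin (hX : ∀ x ∈ X, ‖x‖ ≤ 1) {ε : ℝ} (hε : 0 < ε)
    (Y : X → ({-1, 1} : Set ℝ)) {w : E} (hw : ‖w‖ = 1)
    (hmargin : ∀ x : X, ε ≤ (Y x : ℝ) * ⟪w, (x : E)⟫) :
    ∃ L : List X, L.length ≤ ⌊1 / ε ^ 2⌋₊ ∧
      ∀ x : X, 0 < (Y x : ℝ) * ⟪((L.map fun y => (y, Y y)).map signedPoint).sum, (x : E)⟫ := by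
  obtain ⟨L, hlen, hpos⟩ := Perceptron.exists_list_length_le_of_margin
    (v := fun x : X => signedPoint (x, Y x)) hw.le hε
    (fun x => (norm_signedPoint _).trans_le (hX x x.2))
    (fun x => by simpa only [signedPoint, real_inner_smul_right] using hmargin x)
  refine ⟨L, hlen, fun x => ?_⟩
  simpa only [List.map_map, Function.comp_def, signedPoint, real_inner_smul_right,
    mul_comm (Y x : ℝ)] using hpos x

theorem labeling_eq_of_mul_inner_pos {Y Y' : X → ({-1, 1} : Set ℝ)} {s : E}
    (hY : ∀ x : X, 0 < (Y x : ℝ) * ⟪s, (x : E)⟫) (hY' : ∀ x : X, 0 < (Y' x : ℝ) * ⟪s, (x : E)⟫) :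
    Y = Y' :=
  funext fun x => Subtype.ext <| eq_of_mem_pair_of_mul_pos (Y x).2 (Y' x).2 (hY x) (hY' x)

end Labelings

theorem count_separable_labelings_general {d n : ℕ}
    (X : Finset (EuclideanSpace ℝ (Fin d))) (hcard : X.card = n)
    (hnorm : ∀ x ∈ X, ‖x‖ ≤ 1)
    (ε : ℝ) (hε : 0 < ε) :
    (Nat.card {Y : X → ({-1, 1} : Set ℝ) //
        ∃ w : EuclideanSpace ℝ (Fin d), ‖w‖ = 1 ∧
          ∀ x : X, ε ≤ (Y x : ℝ) * ⟪w, (x : EuclideanSpace ℝ (Fin d))⟫} : ℝ)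
      ≤ (2 * ((n : ℝ) + 1)) ^ ((1 : ℝ) / ε ^ 2) := by
  set K := ⌊1 / ε ^ 2⌋₊
  set S := {Y : X → ({-1, 1} : Set ℝ) // ∃ w : EuclideanSpace ℝ (Fin d), ‖w‖ = 1 ∧
      ∀ x : X, ε ≤ (Y x : ℝ) * ⟪w, (x : EuclideanSpace ℝ (Fin d))⟫}
  have hencode (Y : S) :=
    exists_encoding_of_margin hnorm hε Y.1 Y.2.choose_spec.1 Y.2.choose_spec.2
  choose L hlen hpos using hencode
  have hinj : Function.Injective fun Y => (L Y).map fun y => (y, Y.1 y) := by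
    intro Y Y' h
    exact Subtype.ext (labeling_eq_of_mul_inner_pos (hpos Y) (by simpa only [← h] using hpos Y'))
  have hcount := Nat.card_le_of_injective_list _ hinj (K := K)
    (by simpa only [List.length_map] using hlen)
  rw [Nat.card_prod_sign, Nat.card_eq_finsetCard, hcard] at hcount
  calc (Nat.card _ : ℝ) ≤ ((2 * n + 1 : ℕ) : ℝ) ^ K := by exact_mod_cast hcount
    _ ≤ (2 * ((n : ℝ) + 1)) ^ K := by push_cast; gcongr; linarith
    _ = (2 * ((n : ℝ) + 1)) ^ (K : ℝ) := (Real.rpow_natCast _ _).symm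
    _ ≤ (2 * ((n : ℝ) + 1)) ^ ((1 : ℝ) / ε ^ 2) :=
        Real.rpow_le_rpow_of_exponent_le (by linarith [(n.cast_nonneg : (0 : ℝ) ≤ n)])
          (Nat.floor_le (by positivity))

theorem count_separable_labelings {d n : ℕ}
    (X : Finset (EuclideanSpace ℝ (Fin d))) (hcard : X.card = n)
    (hnorm : ∀ x ∈ X, ‖x‖ ≤ 1) (hmax : ∃ x ∈ X, ‖x‖ = 1)
    (ε : ℝ) (hε : 0 < ε) :
    (Nat.card {Y : X → ({-1, 1} : Set ℝ) //
        ∃ w : EuclideanSpace ℝ (Fin d), ‖w‖ = 1 ∧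
          ∀ x : X, ε ≤ (Y x : ℝ) * ⟪w, (x : EuclideanSpace ℝ (Fin d))⟫} : ℝ)
      ≤ (2 * ((n : ℝ) + 1)) ^ ((1 : ℝ) / ε ^ 2) :=
  count_separable_labelings_general X hcard hnorm ε hε
end
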